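/- arXiv:1302.1611 — 3 statements merged into one kernel-verified Lean document; each statement's English description precedes it below -/
import Mathlib

section
/- For every ε ∈ (0, 1], ∫_{ε/2}^{∞} 4x / ( log(4x/ε) (e^{x²/2} − 1) ) dx ≤ 8 log log(4/ε) + 7. -/
/-!
Split the integral at `x = 1`. On `(ε/2, 1]`, `exp (x²/2) - 1 ≥ x²/2` bounds the integrand by
`8 / (x log (4x/ε))`, the derivative of `8 log log (4x/ε)`; this produces the main term
`8 log log (4/ε) - 8 log log 2`. On `(1, ∞)`, `log (4x/ε) ≥ log 4` bounds it by
`(4 / log 4) x / (exp (x²/2) - 1)`, the derivative of `(4 / log 4) log (1 - exp (-x²/2))`.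
The constant `-8 log log 2 - (4 / log 4) log (1 - exp (-1/2)) ≈ 5.6` is below `7`.
-/

open MeasureTheory Real Set Filter Topology

theorem integrableOn_and_setIntegral_le_of_nonneg_of_le {α : Type*} [MeasurableSpace α]
    {μ : Measure α} {s : Set α} {f g : α → ℝ} (hs : MeasurableSet s)
    (hf : AEStronglyMeasurable f (μ.restrict s)) (hf0 : ∀ x ∈ s, 0 ≤ f x)
    (hfg : ∀ x ∈ s, f x ≤ g x) (hg : IntegrableOn g s μ) :
    IntegrableOn f s μ ∧ ∫ x in s, f x ∂μ ≤ ∫ x in s, g x ∂μ := by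
  have hf' : IntegrableOn f s μ := hg.mono' hf <| ae_restrict_of_forall_mem hs fun x hx => by
    rw [Real.norm_of_nonneg (hf0 x hx)]
    exact hfg x hx
  exact ⟨hf', setIntegral_mono_on hf' hg hs hfg⟩

theorem hasDerivAt_log_log_mul {c x : ℝ} (hx : 1 < c * x) :
    HasDerivAt (fun x => log (log (c * x))) (x * log (c * x))⁻¹ x := by
  have hcx : c * x ≠ 0 := by positivity
  have hc : c ≠ 0 := left_ne_zero_of_mul hcx
  have hx0 : x ≠ 0 := right_ne_zero_of_mul hcx
  convert (((hasDerivAt_id' x).const_mul c).log hcx).log (log_pos hx).ne' using 1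
  field_simp

theorem intervalIntegrable_inv_mul_log_mul {a b c : ℝ} (hc : ∀ x ∈ uIcc a b, 1 < c * x) :
    IntervalIntegrable (fun x => (x * log (c * x))⁻¹) volume a b := by
  have hc0 : ∀ x ∈ uIcc a b, c * x ≠ 0 := fun x hx => (one_pos.trans (hc x hx)).ne'
  refine ContinuousOn.intervalIntegrable <|
    ContinuousOn.inv₀ (by fun_prop (disch := exact hc0)) fun x hx => ?_
  exact mul_ne_zero (right_ne_zero_of_mul (hc0 x hx)) (log_pos (hc x hx)).ne'

theorem integral_inv_mul_log_mul {a b c : ℝ} (hc : ∀ x ∈ uIcc a b, 1 < c * x) :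
    ∫ x in a..b, (x * log (c * x))⁻¹ = log (log (c * b)) - log (log (c * a)) :=
  intervalIntegral.integral_eq_sub_of_hasDerivAt
    (fun x hx => hasDerivAt_log_log_mul (hc x hx)) (intervalIntegrable_inv_mul_log_mul hc)

theorem one_lt_exp_sq_half {x : ℝ} (hx : x ≠ 0) : 1 < exp (x ^ 2 / 2) :=
  one_lt_exp_iff.mpr (by positivity)

theorem hasDerivAt_log_one_sub_exp_neg_sq_half {x : ℝ} (hx : x ≠ 0) :
    HasDerivAt (fun x => log (1 - exp (-(x ^ 2 / 2)))) (x / (exp (x ^ 2 / 2) - 1)) x := by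
  have hE := one_lt_exp_sq_half hx
  have hw : 1 - exp (-(x ^ 2 / 2)) ≠ 0 := by
    rw [exp_neg]
    linarith [inv_lt_one_of_one_lt₀ hE]
  refine ((((((hasDerivAt_pow 2 x).div_const 2).neg).exp).const_sub 1).log hw).congr_deriv ?_
  simp only [Pi.neg_apply, exp_neg]
  field_simp
  ring

theorem tendsto_log_one_sub_exp_neg_sq_half :
    Tendsto (fun x : ℝ => log (1 - exp (-(x ^ 2 / 2)))) atTop (𝓝 0) := by
  have h : Tendsto (fun x : ℝ => 1 - exp (-(x ^ 2 / 2))) atTop (𝓝 1) := by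
    simpa using (tendsto_exp_atBot.comp <| tendsto_neg_atTop_atBot.comp <|
      (tendsto_pow_atTop two_ne_zero).atTop_div_const two_pos).const_sub 1
  simpa [Function.comp_def] using (continuousAt_log one_ne_zero).tendsto.comp h

theorem div_exp_sq_half_sub_one_nonneg {x : ℝ} (hx : 0 < x) : 0 ≤ x / (exp (x ^ 2 / 2) - 1) :=
  div_nonneg hx.le (sub_nonneg.mpr (one_lt_exp_sq_half hx.ne').le)

theorem integral_Ioi_div_exp_sq_half_sub_one {a : ℝ} (ha : 0 < a) :
    IntegrableOn (fun x => x / (exp (x ^ 2 / 2) - 1)) (Ioi a) ∧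
      ∫ x in Ioi a, x / (exp (x ^ 2 / 2) - 1) = -log (1 - exp (-(a ^ 2 / 2))) := by
  have hderiv : ∀ x ∈ Ici a, HasDerivAt (fun x => log (1 - exp (-(x ^ 2 / 2))))
      (x / (exp (x ^ 2 / 2) - 1)) x := fun x hx =>
    hasDerivAt_log_one_sub_exp_neg_sq_half (ha.trans_le hx).ne'
  have hnonneg : ∀ x ∈ Ioi a, 0 ≤ x / (exp (x ^ 2 / 2) - 1) := fun x hx =>
    div_exp_sq_half_sub_one_nonneg (ha.trans hx)
  have hlim := tendsto_log_one_sub_exp_neg_sq_half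
  refine ⟨integrableOn_Ioi_deriv_of_nonneg' hderiv hnonneg hlim, ?_⟩
  rw [integral_Ioi_of_hasDerivAt_of_nonneg' hderiv hnonneg hlim, zero_sub]

theorem neg_two_fifths_lt_log_log_two : -(2 / 5) < log (log 2) := by
  rw [lt_log_iff_exp_lt (log_pos one_lt_two), exp_neg]
  have h := quadratic_le_exp_of_nonneg (show (0 : ℝ) ≤ 2 / 5 by norm_num)
  rw [inv_lt_iff_one_lt_mul₀ (by positivity)]
  nlinarith [log_two_gt_d9]

theorem neg_six_fifths_lt_log_one_sub_exp_neg_half : -(6 / 5) < log (1 - exp (-(1 / 2))) := by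
  have h1 := quadratic_le_exp_of_nonneg (show (0 : ℝ) ≤ 1 / 2 by norm_num)
  have h2 := quadratic_le_exp_of_nonneg (show (0 : ℝ) ≤ 6 / 5 by norm_num)
  have h3 : exp (-(1 / 2)) ≤ 8 / 13 := by
    rw [exp_neg, inv_le_comm₀ (exp_pos _) (by norm_num)]; linarith
  have h4 : exp (-(6 / 5)) ≤ 25 / 73 := by
    rw [exp_neg, inv_le_comm₀ (exp_pos _) (by norm_num)]; linarith
  rw [lt_log_iff_exp_lt (by linarith)]
  linarith

theorem four_div_log_four_lt_three : 4 / log 4 < 3 := by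
  have h : 4 / 3 < log 4 := by
    rw [show (4 : ℝ) = 2 ^ 2 by norm_num, log_pow]
    linarith [log_two_gt_d9]
  rw [div_lt_iff₀ (by linarith)]
  linarith

theorem four_mul_div_log_mul_exp_sq_half_sub_one_nonneg {ε x : ℝ} (hε : 0 < ε)
    (hx : ε < 4 * x) :
    0 ≤ 4 * x / (log (4 * x / ε) * (exp (x ^ 2 / 2) - 1)) := by
  have hx0 : 0 < x := by linarith
  have hL : 0 < log (4 * x / ε) := log_pos ((one_lt_div hε).mpr hx)
  have hE : 0 < exp (x ^ 2 / 2) - 1 := sub_pos.mpr (one_lt_exp_sq_half hx0.ne')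
  positivity

theorem integral_Ioc_four_mul_div_log_mul_exp_sq_half_sub_one_le {ε : ℝ} (hε : 0 < ε)
    (hε2 : ε ≤ 2) :
    IntegrableOn (fun x => 4 * x / (log (4 * x / ε) * (exp (x ^ 2 / 2) - 1))) (Ioc (ε / 2) 1) ∧
      ∫ x in Ioc (ε / 2) 1, 4 * x / (log (4 * x / ε) * (exp (x ^ 2 / 2) - 1)) ≤
        8 * (log (log (4 / ε)) - log (log 2)) := by
  have hc : ∀ x ∈ uIcc (ε / 2) 1, 1 < 4 / ε * x := fun x hx => by
    rw [uIcc_of_le (by linarith)] at hx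
    rw [div_mul_eq_mul_div, one_lt_div hε]
    linarith [hx.1]
  have hint : ∫ x in Ioc (ε / 2) 1, 8 * (x * log (4 / ε * x))⁻¹ =
      8 * (log (log (4 / ε)) - log (log 2)) := by
    rw [integral_const_mul, ← intervalIntegral.integral_of_le (by linarith),
      integral_inv_mul_log_mul hc, mul_one, show 4 / ε * (ε / 2) = 2 by field_simp; norm_num]
  rw [← hint]
  refine integrableOn_and_setIntegral_le_of_nonneg_of_le measurableSet_Ioc
    (by fun_prop : Measurable _).aestronglyMeasurable
    (fun x hx => four_mul_div_log_mul_exp_sq_half_sub_one_nonneg hε (by linarith [hx.1]))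
    (fun x hx => ?_) ?_
  · have hx0 : 0 < x := by linarith [hx.1]
    have hL : 0 < log (4 * x / ε) := log_pos ((one_lt_div hε).mpr (by linarith [hx.1]))
    have hE : x ^ 2 / 2 < exp (x ^ 2 / 2) - 1 := by
      linarith [add_one_lt_exp (by positivity : x ^ 2 / 2 ≠ 0)]
    calc 4 * x / (log (4 * x / ε) * (exp (x ^ 2 / 2) - 1))
        ≤ 4 * x / (log (4 * x / ε) * (x ^ 2 / 2)) := by gcongr
      _ = 8 * (x * log (4 / ε * x))⁻¹ := by rw [div_mul_eq_mul_div]; field_simp; ring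
  · exact ((intervalIntegrable_iff_integrableOn_Ioc_of_le (by linarith)).mp
      (intervalIntegrable_inv_mul_log_mul hc)).const_mul 8

theorem integral_Ioi_one_four_mul_div_log_mul_exp_sq_half_sub_one_le {ε : ℝ} (hε : 0 < ε)
    (hε1 : ε ≤ 1) :
    IntegrableOn (fun x => 4 * x / (log (4 * x / ε) * (exp (x ^ 2 / 2) - 1))) (Ioi 1) ∧
      ∫ x in Ioi 1, 4 * x / (log (4 * x / ε) * (exp (x ^ 2 / 2) - 1)) ≤
        4 / log 4 * -log (1 - exp (-(1 / 2))) := by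
  obtain ⟨hint, hval⟩ := integral_Ioi_div_exp_sq_half_sub_one one_pos
  rw [one_pow] at hval
  rw [← hval, ← integral_const_mul]
  refine integrableOn_and_setIntegral_le_of_nonneg_of_le measurableSet_Ioi
    (by fun_prop : Measurable _).aestronglyMeasurable
    (fun x hx => four_mul_div_log_mul_exp_sq_half_sub_one_nonneg hε (by linarith [hx.out]))
    (fun x hx => ?_) (hint.const_mul _)
  have hx : 1 < x := hx
  have hE : 0 < exp (x ^ 2 / 2) - 1 := sub_pos.mpr (one_lt_exp_sq_half (by positivity))
  have hL : log 4 ≤ log (4 * x / ε) :=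
    log_le_log (by norm_num) (by rw [le_div_iff₀ hε]; nlinarith)
  have hL4 : 0 < log 4 := log_pos (by norm_num)
  calc 4 * x / (log (4 * x / ε) * (exp (x ^ 2 / 2) - 1))
      ≤ 4 * x / (log 4 * (exp (x ^ 2 / 2) - 1)) := by gcongr
    _ = 4 / log 4 * (x / (exp (x ^ 2 / 2) - 1)) := by field_simp

/-- For every `ε ∈ (0,1]`,
`∫_{ε/2}^{∞} 4x / (log(4x/ε) (e^{x²/2} − 1)) dx ≤ 8 log log (4/ε) + 7`. -/
theorem integral_four_x_div_log_exp_sq_sub_one (ε : ℝ) (hε : ε ∈ Set.Ioc (0 : ℝ) 1) :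
    ∫ x in Set.Ioi (ε / 2), 4 * x / (Real.log (4 * x / ε) * (Real.exp (x ^ 2 / 2) - 1))
      ≤ 8 * Real.log (Real.log (4 / ε)) + 7 := by
  obtain ⟨hε0, hε1⟩ := hε
  obtain ⟨hint_Ioc, hle_Ioc⟩ :=
    integral_Ioc_four_mul_div_log_mul_exp_sq_half_sub_one_le hε0 (by linarith)
  obtain ⟨hint_Ioi, hle_Ioi⟩ :=
    integral_Ioi_one_four_mul_div_log_mul_exp_sq_half_sub_one_le hε0 hε1
  rw [← Ioc_union_Ioi_eq_Ioi (by linarith : ε / 2 ≤ 1),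
    setIntegral_union (Ioc_disjoint_Ioi le_rfl) measurableSet_Ioi hint_Ioc hint_Ioi]
  have hneg_log_nonneg : 0 ≤ -log (1 - exp (-(1 / 2))) :=
    neg_nonneg.mpr (log_nonpos (sub_nonneg.mpr (exp_le_one_iff.mpr (by norm_num)))
      (sub_le_self _ (exp_pos _).le))
  linarith [neg_two_fifths_lt_log_log_two, neg_six_fifths_lt_log_one_sub_exp_neg_half,
    mul_le_mul_of_nonneg_right four_div_log_four_lt_three.le hneg_log_nonneg]
end

section
/- Let ρ_0 be a probability measure on a measurable space 𝒳 and, for each Δ ∈ ℝ, let ρ_Δ be a probability measure on 𝒳 absolutely continuous with respect to ρ_0. Let λ be a finite positive measure on ℝ, set ρ̄ = ∫ Δ ρ_Δ dλ(Δ) (a positive measure on 𝒳) and C_λ = 1 + ∫ Δ dλ(Δ). Then for any measurable function ψ : 𝒳 → {0,1}, ρ_0(ψ = 1) + ∫ Δ ρ_Δ(ψ = 0) dλ(Δ) ≥ (1/C_λ) exp(−KL(ρ_0, ρ̄)). -/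
open MeasureTheory Real

open scoped Classical in
/-- The Kullback–Leibler divergence `KL(ρ, ρ') = ∫ log (dρ/dρ') dρ`, with value `⊤`
when it is not well-defined (i.e. when `ρ ⋠ ρ'` or the log-likelihood ratio is not
integrable). -/
noncomputable def klDiv {X : Type*} [MeasurableSpace X] (ρ ρ' : Measure X) : EReal :=
  if ρ ≪ ρ' ∧ Integrable (llr ρ ρ') ρ then ((∫ x, llr ρ ρ' x ∂ρ : ℝ) : EReal) else ⊤

/-- `x ↦ exp (-x)` for extended-real `x ∈ (-∞, ∞]`, with `exp (-⊤) = 0`. -/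
noncomputable def expNeg (x : EReal) : ℝ := if x = ⊤ then 0 else Real.exp (- x.toReal)

/-- The positive measure `ρ̄ = ∫ Δ ρ_Δ dλ(Δ)`. -/
noncomputable def mixMeasure {X : Type*} [MeasurableSpace X]
    (lam : Measure ℝ) (ρ : ℝ → Measure X) : Measure X :=
  (lam.withDensity fun Δ => ENNReal.ofReal Δ).bind ρ

/-! Write `p = dρ̄/dρ₀`. For `A = {ψ = 1}` one has `ρ₀(A) + ρ̄(Aᶜ) ≥ ∫ min(1, p) dρ₀`. On the other
hand `-KL(ρ₀, ρ̄) = ∫ log p dρ₀`, and applying Jensen's inequality to the negative and positive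
parts of `log p` separately gives `exp(-KL) ≤ ∫ min(1, p) dρ₀ · ∫ max(1, p) dρ₀`, where the last
factor is at most `1 + ρ̄(X) = 1 + ∫ Δ dλ(Δ)`. -/

section Jensen

variable {Ω : Type*} [MeasurableSpace Ω] {ν : Measure Ω} [IsProbabilityMeasure ν] {g : Ω → ℝ}

lemma exp_integral_le_integral_exp (hg : Integrable g ν)
    (hexp : Integrable (fun x => exp (g x)) ν) :
    exp (∫ x, g x ∂ν) ≤ ∫ x, exp (g x) ∂ν :=
  convexOn_exp.map_integral_le continuous_exp.continuousOn isClosed_univ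
    (ae_of_all _ fun _ => Set.mem_univ _) hg hexp

lemma exp_integral_le_integral_min_one_exp_mul (hg : Integrable g ν)
    (hexp : Integrable (fun x => exp (g x)) ν) :
    exp (∫ x, g x ∂ν) ≤ (∫ x, min 1 (exp (g x)) ∂ν) * (1 + ∫ x, exp (g x) ∂ν) := by
  have hmin : Integrable (fun x => min 0 (g x)) ν := (integrable_const 0).inf hg
  have hmax : Integrable (fun x => max 0 (g x)) ν := (integrable_const 0).sup hg
  have hexp_min : (fun x => exp (min 0 (g x))) = fun x => min 1 (exp (g x)) :=
    funext fun x => by rw [exp_monotone.map_min, exp_zero]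
  have hexp_max : (fun x => exp (max 0 (g x))) = fun x => max 1 (exp (g x)) :=
    funext fun x => by rw [exp_monotone.map_max, exp_zero]
  have hint_min : Integrable (fun x => min 1 (exp (g x))) ν := (integrable_const 1).inf hexp
  have hint_max : Integrable (fun x => max 1 (exp (g x))) ν := (integrable_const 1).sup hexp
  have hmax_le : ∫ x, max 1 (exp (g x)) ∂ν ≤ 1 + ∫ x, exp (g x) ∂ν := by
    calc ∫ x, max 1 (exp (g x)) ∂ν ≤ ∫ x, (1 + exp (g x)) ∂ν :=
          integral_mono hint_max ((integrable_const 1).add hexp) fun x =>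
            max_le (by linarith [exp_pos (g x)]) (by linarith)
      _ = 1 + ∫ x, exp (g x) ∂ν := by simp [integral_add (integrable_const 1) hexp]
  calc exp (∫ x, g x ∂ν) = exp (∫ x, min 0 (g x) ∂ν) * exp (∫ x, max 0 (g x) ∂ν) := by
        rw [← exp_add, ← integral_add hmin hmax]
        simp only [min_add_max, zero_add]
    _ ≤ (∫ x, min 1 (exp (g x)) ∂ν) * ∫ x, max 1 (exp (g x)) ∂ν := by
        rw [← hexp_min, ← hexp_max]
        exact mul_le_mul (exp_integral_le_integral_exp hmin (hexp_min ▸ hint_min))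
          (exp_integral_le_integral_exp hmax (hexp_max ▸ hint_max)) (exp_pos _).le
          (integral_nonneg fun x => (exp_pos _).le)
    _ ≤ (∫ x, min 1 (exp (g x)) ∂ν) * (1 + ∫ x, exp (g x) ∂ν) := by
        gcongr

end Jensen

section TestingRisk

variable {X : Type*} [MeasurableSpace X] {ρ₀ μ : Measure X} [IsProbabilityMeasure ρ₀]
  [IsFiniteMeasure μ] {A : Set X}

lemma integral_min_one_toReal_rnDeriv_le (hA : MeasurableSet A) :
    ∫ x, min 1 (μ.rnDeriv ρ₀ x).toReal ∂ρ₀ ≤ ρ₀.real A + μ.real Aᶜ := by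
  have hint : Integrable (fun x => min 1 (μ.rnDeriv ρ₀ x).toReal) ρ₀ :=
    (integrable_const 1).inf Measure.integrable_toReal_rnDeriv
  rw [← integral_add_compl hA hint]
  gcongr
  · calc ∫ x in A, min 1 (μ.rnDeriv ρ₀ x).toReal ∂ρ₀ ≤ ∫ _ in A, (1 : ℝ) ∂ρ₀ :=
          setIntegral_mono hint.integrableOn (integrable_const 1) fun _ => min_le_left _ _
      _ = ρ₀.real A := by simp
  · calc ∫ x in Aᶜ, min 1 (μ.rnDeriv ρ₀ x).toReal ∂ρ₀
          ≤ ∫ x in Aᶜ, (μ.rnDeriv ρ₀ x).toReal ∂ρ₀ :=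
          setIntegral_mono hint.integrableOn Measure.integrable_toReal_rnDeriv.integrableOn
            fun _ => min_le_right _ _
      _ ≤ μ.real Aᶜ := Measure.setIntegral_toReal_rnDeriv_le (measure_ne_top _ _)

lemma exp_neg_integral_llr_le (hac : ρ₀ ≪ μ) (hint : Integrable (llr ρ₀ μ) ρ₀)
    (hA : MeasurableSet A) :
    exp (-∫ x, llr ρ₀ μ x ∂ρ₀) ≤ (ρ₀.real A + μ.real Aᶜ) * (1 + μ.real Set.univ) := by
  have hexp : (fun x => exp (-llr ρ₀ μ x)) =ᵐ[ρ₀] fun x => (μ.rnDeriv ρ₀ x).toReal :=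
    exp_neg_llr hac
  have hjensen := exp_integral_le_integral_min_one_exp_mul hint.neg
    (Measure.integrable_toReal_rnDeriv.congr hexp.symm)
  simp only [Pi.neg_apply, integral_neg] at hjensen
  rw [integral_congr_ae hexp,
    integral_congr_ae (hexp.mono fun x hx => congrArg (min 1) hx)] at hjensen
  refine hjensen.trans (mul_le_mul (integral_min_one_toReal_rnDeriv_le hA) ?_ ?_ (by positivity))
  · rw [← setIntegral_univ]
    gcongr
    exact Measure.setIntegral_toReal_rnDeriv_le (measure_ne_top _ _)
  · positivity

lemma inv_one_add_mul_expNeg_klDiv_le (hA : MeasurableSet A) :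
    (1 + μ.real Set.univ)⁻¹ * expNeg (klDiv ρ₀ μ) ≤ ρ₀.real A + μ.real Aᶜ := by
  rw [klDiv]
  split_ifs with h
  · rw [expNeg, if_neg (EReal.coe_ne_top _), EReal.toReal_coe, inv_mul_le_iff₀ (by positivity),
      mul_comm]
    exact exp_neg_integral_llr_le h.1 h.2 hA
  · simp only [expNeg, if_true, mul_zero]
    positivity

end TestingRisk

section Mixture

variable {X : Type*} [MeasurableSpace X] {lam : Measure ℝ} {ρ : ℝ → Measure X} {s : Set X}

lemma mixMeasure_apply (hρ : Measurable ρ) (hs : MeasurableSet s) :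
    mixMeasure lam ρ s = ∫⁻ Δ, ENNReal.ofReal Δ * ρ Δ s ∂lam := by
  have hρs : Measurable fun Δ => ρ Δ s := (Measure.measurable_coe hs).comp hρ
  rw [mixMeasure, Measure.bind_apply hs hρ.aemeasurable,
    lintegral_withDensity_eq_lintegral_mul _ ENNReal.measurable_ofReal hρs]
  rfl

lemma mixMeasure_real_apply [∀ Δ, IsFiniteMeasure (ρ Δ)] (hρ : Measurable ρ)
    (hlam : ∀ᵐ Δ ∂lam, 0 ≤ Δ) (hs : MeasurableSet s) :
    (mixMeasure lam ρ).real s = ∫ Δ, Δ * (ρ Δ).real s ∂lam := by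
  have hmeas : Measurable fun Δ => Δ * (ρ Δ).real s :=
    measurable_id.mul ((Measure.measurable_coe hs).comp hρ).ennreal_toReal
  rw [integral_eq_lintegral_of_nonneg_ae (hlam.mono fun Δ hΔ => by positivity)
    hmeas.aestronglyMeasurable, measureReal_def, mixMeasure_apply hρ hs]
  congr 1
  refine lintegral_congr_ae (hlam.mono fun Δ hΔ => ?_)
  simp only [measureReal_def, ENNReal.ofReal_mul hΔ, ENNReal.ofReal_toReal (measure_ne_top _ _)]

lemma mixMeasure_real_univ [∀ Δ, IsProbabilityMeasure (ρ Δ)] (hρ : Measurable ρ)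
    (hlam : ∀ᵐ Δ ∂lam, 0 ≤ Δ) :
    (mixMeasure lam ρ).real Set.univ = ∫ Δ, Δ ∂lam := by
  simp [mixMeasure_real_apply hρ hlam MeasurableSet.univ]

lemma isFiniteMeasure_mixMeasure [∀ Δ, IsProbabilityMeasure (ρ Δ)] (hρ : Measurable ρ)
    (hlam : Integrable (fun Δ : ℝ => Δ) lam) : IsFiniteMeasure (mixMeasure lam ρ) := by
  constructor
  simpa [mixMeasure_apply hρ MeasurableSet.univ] using hlam.lintegral_lt_top

end Mixture

theorem composite_test_errors_ge_inv_C_exp_neg_kl_general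
    {X : Type*} [MeasurableSpace X] (ρ₀ : Measure X) [IsProbabilityMeasure ρ₀]
    (ρ : ℝ → Measure X) (hρmeas : Measurable ρ)
    (hρprob : ∀ Δ : ℝ, IsProbabilityMeasure (ρ Δ))
    (lam : Measure ℝ) (hsupp : lam (Set.Iio 0) = 0)
    (hlamint : Integrable (fun Δ : ℝ => Δ) lam)
    (ψ : X → Fin 2) (hψ : Measurable ψ) :
    (ρ₀ {x | ψ x = 1}).toReal + ∫ Δ, Δ * ((ρ Δ) {x | ψ x = 0}).toReal ∂lam
      ≥ (1 + ∫ Δ, Δ ∂lam)⁻¹ * expNeg (klDiv ρ₀ (mixMeasure lam ρ)) := by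
  have hnonneg : ∀ᵐ Δ ∂lam, 0 ≤ Δ := by
    rw [ae_iff]
    simp only [not_le]
    exact hsupp
  have hA : MeasurableSet {x | ψ x = 1} := hψ (measurableSet_singleton 1)
  have hcompl : {x | ψ x = 0} = {x | ψ x = 1}ᶜ := by
    ext x
    show ψ x = 0 ↔ ¬ψ x = 1
    omega
  have := isFiniteMeasure_mixMeasure hρmeas hlamint
  rw [ge_iff_le, hcompl, ← mixMeasure_real_univ hρmeas hnonneg]
  exact (inv_one_add_mul_expNeg_klDiv_le hA).trans_eq
    (congrArg _ (mixMeasure_real_apply hρmeas hnonneg hA.compl))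

/-- **Lower bound for a composite, rescaled testing risk (Lemma 7).**
Let `ρ₀` be a probability measure on `X` and, for each `Δ ∈ ℝ`, let `ρ_Δ` be a probability
measure on `X` absolutely continuous with respect to `ρ₀`.  Let `λ` be a finite positive
measure on `ℝ` (supported on the nonnegative reals), set `ρ̄ = ∫ Δ ρ_Δ dλ(Δ)` and
`C_λ = 1 + ∫ Δ dλ(Δ)`.  Then for any measurable `ψ : X → {0,1}`,
`ρ₀(ψ = 1) + ∫ Δ ρ_Δ(ψ = 0) dλ(Δ) ≥ (1/C_λ) exp (−KL(ρ₀, ρ̄))`. -/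
theorem composite_test_errors_ge_inv_C_exp_neg_kl
    {X : Type*} [MeasurableSpace X] (ρ₀ : Measure X) [IsProbabilityMeasure ρ₀]
    (ρ : ℝ → Measure X) (hρmeas : Measurable ρ)
    (hρprob : ∀ Δ : ℝ, IsProbabilityMeasure (ρ Δ))
    (hρac : ∀ Δ : ℝ, ρ Δ ≪ ρ₀)
    (lam : Measure ℝ) [IsFiniteMeasure lam] (hsupp : lam (Set.Iio 0) = 0)
    (hlamint : Integrable (fun Δ : ℝ => Δ) lam)
    (ψ : X → Fin 2) (hψ : Measurable ψ) :
    (ρ₀ {x | ψ x = 1}).toReal + ∫ Δ, Δ * ((ρ Δ) {x | ψ x = 0}).toReal ∂lam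
      ≥ (1 + ∫ Δ, Δ ∂lam)⁻¹ * expNeg (klDiv ρ₀ (mixMeasure lam ρ)) :=
  composite_test_errors_ge_inv_C_exp_neg_kl_general ρ₀ ρ hρmeas hρprob lam hsupp hlamint ψ hψ
end

section
/- Consider the two-armed stochastic bandit problem. Let Δ ∈ (0, 1], let ν = N(0,1) ⊗ N(−Δ,1) (arm 1 has mean 0, arm 2 has mean −Δ) and ν′ = N(−Δ,1) ⊗ N(0,1). Then for any policy and every n ≥ 1 with n ≥ 1/Δ², max( R_n(ν), R_n(ν′) ) ≥ 1/(4Δ). -/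
open MeasureTheory ProbabilityTheory Real

/-- `IsBanditRun X κ ν Q` states that, under the probability measure `Q`, the process
`X t = (arm pulled at round t, reward observed at round t)` (rounds `t = 0, 1, 2, …`) is a
run of the policy given by the Markov kernels `κ t` (from histories of length `t` to arms)
on the two-armed bandit instance whose arm `i` has reward distribution `ν i`: conditionally
on the history, the arm `I_t` is drawn according to `κ t` and, conditionally on the history
and `I_t = i`, the reward is drawn according to `ν i`. -/
def IsBanditRun {Ω : Type*} [MeasurableSpace Ω] (X : ℕ → Ω → Fin 2 × ℝ)
    (κ : (t : ℕ) → Kernel (Fin t → Fin 2 × ℝ) (Fin 2))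
    (ν : Fin 2 → Measure ℝ) (Q : Measure Ω) : Prop :=
  (∀ t, Measurable (X t)) ∧
    ∀ (t : ℕ) (A : Set (Fin t → Fin 2 × ℝ)), MeasurableSet A →
      ∀ (i : Fin 2) (B : Set ℝ), MeasurableSet B →
        Q {ω | (fun ℓ : Fin t => X ℓ.val ω) ∈ A ∧ (X t ω).1 = i ∧ (X t ω).2 ∈ B}
          = ∫⁻ h in A, κ t h {i} * ν i B ∂(Q.map fun ω (ℓ : Fin t) => X ℓ.val ω)

/-- The cumulative regret at horizon `n` of the run `X` under the measure `Q`, for a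
two-armed instance whose arms have means `m 0` and `m 1`:
`R_n = n·max(m 0, m 1) − ∑_{t<n} E[m (I_t)]`. -/
noncomputable def banditRegret {Ω : Type*} [MeasurableSpace Ω] (X : ℕ → Ω → Fin 2 × ℝ)
    (n : ℕ) (m : Fin 2 → ℝ) (Q : Measure Ω) : ℝ :=
  n * max (m 0) (m 1) - ∑ t ∈ Finset.range n, ∫ ω, m ((X t ω).1) ∂Q

open scoped ENNReal NNReal

/-!
The two regrets are `Δ · ∑_{t<n} P(I_t = 1)` and `Δ · ∑_{t<n} P'(I_t = 0)`, so it suffices to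
show `P(I_t = 1) + P'(I_t = 0) ≥ 1 - Δ√t/2` in every round: this is at least `1/2` during the
first `⌈1/Δ²⌉` rounds, and summing gives `R_n(ν) + R_n(ν') ≥ 1/(2Δ)`.

In round `t`, let `L` be the likelihood ratio of the history under `P'` against `P`. The policy
kernels cancel in it, so `L = ∏_{ℓ<t} dν'_{I_ℓ}/dν_{I_ℓ}(Y_ℓ)`, and since `κ{0} + κ{1} = 1`,
`P(I_t = 1) + P'(I_t = 0) = E_P[κ{1} + κ{0} L] ≥ E_P[min(1, L)] =: m`. Splitting
`√L = √min(1, L) · √max(1, L)`, Cauchy–Schwarz gives Le Cam's inequality `(E_P √L)² ≤ m (2 - m)`,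
while the Hellinger affinity `E_P √L` factorises over the rounds into `exp(-Δ²/8)^t` whatever arms
are pulled, because both arms have the same affinity. Hence `(1 - m)² ≤ 1 - exp(-Δ²t/4) ≤ Δ²t/4`.
-/

section LeCam

variable {α : Type*} [MeasurableSpace α] (μ : Measure α)

theorem sq_lintegral_le_lintegral_min_mul_lintegral_max {S : α → ℝ≥0∞} (hS : Measurable S) :
    (∫⁻ a, S a ∂μ) ^ 2 ≤ (∫⁻ a, min 1 (S a ^ 2) ∂μ) * ∫⁻ a, max 1 (S a ^ 2) ∂μ := by
  have hsplit (a : α) : min 1 (S a) * max 1 (S a) = S a := by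
    rcases le_total 1 (S a) with h | h <;> simp [h]
  have hCS := ENNReal.lintegral_mul_le_Lp_mul_Lq μ Real.HolderConjugate.two_two
    ((measurable_const (a := (1 : ℝ≥0∞))).min hS).aemeasurable
    ((measurable_const (a := (1 : ℝ≥0∞))).max hS).aemeasurable
  simp only [Pi.mul_apply, hsplit, ENNReal.rpow_two] at hCS
  calc (∫⁻ a, S a ∂μ) ^ 2
      ≤ ((∫⁻ a, min 1 (S a) ^ 2 ∂μ) ^ (1 / 2 : ℝ)
          * (∫⁻ a, max 1 (S a) ^ 2 ∂μ) ^ (1 / 2 : ℝ)) ^ 2 := pow_le_pow_left' hCS 2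
    _ = (∫⁻ a, min 1 (S a ^ 2) ∂μ) * ∫⁻ a, max 1 (S a ^ 2) ∂μ := by
        rw [mul_pow, ← ENNReal.rpow_two, ← ENNReal.rpow_two, ← ENNReal.rpow_mul,
          ← ENNReal.rpow_mul]
        norm_num [(pow_left_mono 2).map_min, (pow_left_mono 2).map_max]

theorem one_sub_sqrt_le_lintegral_min [IsProbabilityMeasure μ] {S : α → ℝ≥0∞}
    (hS : Measurable S) (hS_sq : ∫⁻ a, S a ^ 2 ∂μ = 1) :
    1 - √(1 - (∫⁻ a, S a ∂μ).toReal ^ 2) ≤ (∫⁻ a, min 1 (S a ^ 2) ∂μ).toReal := by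
  set m := ∫⁻ a, min 1 (S a ^ 2) ∂μ
  have hm : m ≤ 1 := (lintegral_mono fun a => min_le_left _ _).trans_eq (by simp)
  have hm_top : m ≠ ∞ := hm.trans_lt ENNReal.one_lt_top |>.ne
  have hmin_add_max : m + ∫⁻ a, max 1 (S a ^ 2) ∂μ = 2 := by
    rw [← lintegral_add_left (measurable_const.min (hS.pow_const 2))]
    simp_rw [min_add_max]
    rw [lintegral_add_left measurable_const, hS_sq]
    simp [one_add_one_eq_two]
  have hmax : ∫⁻ a, max 1 (S a ^ 2) ∂μ = 2 - m :=
    ENNReal.eq_sub_of_add_eq hm_top (by rwa [add_comm])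
  have hCS := ENNReal.toReal_mono (ENNReal.mul_ne_top hm_top (by simp))
    (hmax ▸ sq_lintegral_le_lintegral_min_mul_lintegral_max μ hS)
  rw [ENNReal.toReal_mul, ENNReal.toReal_sub_of_le (hm.trans one_le_two) (by simp),
    ENNReal.toReal_pow] at hCS
  have hm' : m.toReal ≤ 1 := ENNReal.toReal_le_of_le_ofReal zero_le_one (by simpa using hm)
  have : 1 - m.toReal ≤ √(1 - (∫⁻ a, S a ∂μ).toReal ^ 2) :=
    (le_abs_self _).trans (Real.abs_le_sqrt (by norm_num at hCS ⊢; nlinarith))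
  linarith

end LeCam

theorem ENNReal.min_one_le_add_mul {a b : ℝ≥0∞} (hab : a + b = 1) (L : ℝ≥0∞) :
    min 1 L ≤ a + b * L :=
  calc min 1 L = a * min 1 L + b * min 1 L := by rw [← add_mul, hab, one_mul]
    _ ≤ a * 1 + b * L := by gcongr <;> simp
    _ = a + b * L := by rw [mul_one]

section Gaussian

variable {v : ℝ≥0}

theorem lintegral_ofReal_exp_mul_gaussianReal (μ c : ℝ) :
    ∫⁻ x, ENNReal.ofReal (exp (c * x)) ∂gaussianReal μ v
      = ENNReal.ofReal (exp (μ * c + v * c ^ 2 / 2)) := by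
  rw [← ofReal_integral_eq_lintegral_ofReal (integrable_exp_mul_gaussianReal c)
    (ae_of_all _ fun x => (exp_pos _).le)]
  exact congrArg ENNReal.ofReal (congrFun mgf_fun_id_gaussianReal c)

theorem gaussianPDFReal_eq_mul_exp (hv : v ≠ 0) (a b x : ℝ) :
    gaussianPDFReal b v x = gaussianPDFReal a v x * exp ((b - a) / v * (x - (a + b) / 2)) := by
  have hv' : (v : ℝ) ≠ 0 := by exact_mod_cast hv
  simp only [gaussianPDFReal]
  rw [mul_assoc _ (exp _), ← exp_add]
  congr 2
  field_simp
  ring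

theorem gaussianReal_eq_withDensity (hv : v ≠ 0) (a b : ℝ) :
    gaussianReal b v = (gaussianReal a v).withDensity
      fun x => ENNReal.ofReal (exp ((b - a) / v * (x - (a + b) / 2))) := by
  rw [gaussianReal_of_var_ne_zero _ hv, gaussianReal_of_var_ne_zero _ hv,
    ← withDensity_mul _ (measurable_gaussianPDF _ _) (by fun_prop)]
  congr 1
  funext x
  simp only [Pi.mul_apply, gaussianPDF]
  rw [← ENNReal.ofReal_mul (gaussianPDFReal_nonneg _ _ _), gaussianPDFReal_eq_mul_exp hv a b]

theorem lintegral_sqrt_density_gaussianReal (a b : ℝ) :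
    ∫⁻ x, ENNReal.ofReal (exp ((b - a) / (2 * v) * (x - (a + b) / 2))) ∂gaussianReal a v
      = ENNReal.ofReal (exp (-((b - a) ^ 2 / (8 * v)))) := by
  have hsplit (x : ℝ) : exp ((b - a) / (2 * v) * (x - (a + b) / 2))
      = exp (-((b - a) / (2 * v) * ((a + b) / 2))) * exp ((b - a) / (2 * v) * x) := by
    rw [← exp_add]
    ring_nf
  simp_rw [hsplit, ENNReal.ofReal_mul (exp_pos _).le]
  rw [lintegral_const_mul _ (by fun_prop), lintegral_ofReal_exp_mul_gaussianReal,
    ← ENNReal.ofReal_mul (exp_pos _).le, ← exp_add]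
  by_cases hv : v = 0
  · simp [hv]
  have hv' : (v : ℝ) ≠ 0 := by exact_mod_cast hv
  congr 2
  field_simp
  ring

end Gaussian

theorem Fin.prod_comp_snoc {α M : Type*} [CommMonoid M] {t : ℕ} (s : α → M) (h : Fin t → α)
    (y : α) : ∏ ℓ, s ((Fin.snoc h y : Fin (t + 1) → α) ℓ) = (∏ ℓ, s (h ℓ)) * s y := by
  simp [Fin.prod_univ_castSucc]

theorem measurable_snoc {α : Type*} [MeasurableSpace α] (t : ℕ) :
    Measurable fun p : (Fin t → α) × α => (Fin.snoc p.1 p.2 : Fin (t + 1) → α) := by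
  refine measurable_pi_lambda _ fun ℓ => Fin.lastCases ?_ (fun j => ?_) ℓ
  · simpa using measurable_snd
  · simp only [Fin.snoc_castSucc]
    exact (measurable_pi_apply j).comp measurable_fst

def history {Ω α : Type*} (X : ℕ → Ω → α) (t : ℕ) (ω : Ω) : Fin t → α := fun ℓ => X ℓ ω

theorem history_succ {Ω α : Type*} (X : ℕ → Ω → α) (t : ℕ) (ω : Ω) :
    history X (t + 1) ω = Fin.snoc (history X t ω) (X t ω) := by
  funext ℓ
  refine Fin.lastCases ?_ (fun j => ?_) ℓ <;> simp [history]

theorem measurable_history {Ω α : Type*} [MeasurableSpace Ω] [MeasurableSpace α]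
    {X : ℕ → Ω → α} (hX : ∀ t, Measurable (X t)) (t : ℕ) : Measurable (history X t) :=
  measurable_pi_lambda _ fun ℓ => hX ℓ

instance ProbabilityTheory.Kernel.isMarkovKernel_ofFunOfCountable {α β : Type*}
    [MeasurableSpace α] [MeasurableSpace β] [Countable α] [MeasurableSingletonClass α]
    (f : α → Measure β) [∀ a, IsProbabilityMeasure (f a)] :
    IsMarkovKernel (Kernel.ofFunOfCountable f) :=
  ⟨fun a => inferInstanceAs (IsProbabilityMeasure (f a))⟩

namespace IsBanditRun

variable {Ω : Type*} [MeasurableSpace Ω] {X : ℕ → Ω → Fin 2 × ℝ}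
  {κ : (t : ℕ) → Kernel (Fin t → Fin 2 × ℝ) (Fin 2)} {ν ν' : Fin 2 → Measure ℝ}
  {Q Q' : Measure Ω}

theorem isProbabilityMeasure_map_history [IsProbabilityMeasure Q] (hQ : IsBanditRun X κ ν Q)
    (t : ℕ) : IsProbabilityMeasure (Q.map (history X t)) :=
  Measure.isProbabilityMeasure_map (measurable_history hQ.1 t).aemeasurable

theorem measure_history_mem_arm_eq (hQ : IsBanditRun X κ ν Q) (t : ℕ)
    {A : Set (Fin t → Fin 2 × ℝ)} (hA : MeasurableSet A) (i : Fin 2) {B : Set ℝ}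
    (hB : MeasurableSet B) :
    Q {ω | history X t ω ∈ A ∧ (X t ω).1 = i ∧ (X t ω).2 ∈ B}
      = ∫⁻ h in A, κ t h {i} * ν i B ∂(Q.map (history X t)) :=
  hQ.2 t A hA i B hB

theorem measure_arm_eq [∀ i, IsProbabilityMeasure (ν i)] (hQ : IsBanditRun X κ ν Q) (t : ℕ)
    (i : Fin 2) : Q {ω | (X t ω).1 = i} = ∫⁻ h, κ t h {i} ∂(Q.map (history X t)) := by
  simpa using hQ.measure_history_mem_arm_eq t MeasurableSet.univ i MeasurableSet.univ

theorem map_history_prodMk_eq_compProd [∀ t, IsMarkovKernel (κ t)]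
    [∀ i, IsProbabilityMeasure (ν i)] [IsProbabilityMeasure Q] (hQ : IsBanditRun X κ ν Q)
    (t : ℕ) :
    Q.map (fun ω => (history X t ω, X t ω))
      = Q.map (history X t) ⊗ₘ (κ t ⊗ₖ Kernel.prodMkLeft _ (Kernel.ofFunOfCountable ν)) := by
  have hX := hQ.1
  have hpair : Measurable fun ω => (history X t ω, X t ω) :=
    (measurable_history hX t).prodMk (hX t)
  have := hQ.isProbabilityMeasure_map_history t
  have := Measure.isProbabilityMeasure_map (μ := Q) hpair.aemeasurable
  refine ext_of_generate_finite _ generateFrom_prod.symm isPiSystem_prod ?_ (by simp)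
  rintro _ ⟨A, hA : MeasurableSet A, T, hT : MeasurableSet T, rfl⟩
  have hslice (i : Fin 2) : MeasurableSet (Prod.mk i ⁻¹' T) := measurable_prodMk_left hT
  have hsplit : (fun ω => (history X t ω, X t ω)) ⁻¹' A ×ˢ T
      = ⋃ i, {ω | history X t ω ∈ A ∧ (X t ω).1 = i ∧ (X t ω).2 ∈ Prod.mk i ⁻¹' T} := by
    ext ω; simp
  dsimp only
  rw [Measure.map_apply hpair (hA.prod hT), hsplit, measure_iUnion, tsum_fintype,
    Measure.compProd_apply_prod hA hT]
  · simp_rw [hQ.measure_history_mem_arm_eq t hA _ (hslice _)]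
    rw [← lintegral_finsetSum _ fun i _ =>
      ((κ t).measurable_coe (measurableSet_singleton i)).mul_const _]
    refine setLIntegral_congr_fun hA fun h _ => ?_
    rw [Kernel.compProd_apply hT, lintegral_fintype]
    exact Finset.sum_congr rfl fun i _ => mul_comm _ _
  · exact fun i j hij => Set.disjoint_left.2 fun ω hi hj => hij (hi.2.1.symm.trans hj.2.1)
  · exact fun i => (measurable_history hX t hA).inter
      (((hX t).fst (measurableSet_singleton i)).inter ((hX t).snd (hslice i)))

theorem lintegral_map_history_succ [∀ t, IsMarkovKernel (κ t)]
    [∀ i, IsProbabilityMeasure (ν i)] [IsProbabilityMeasure Q] (hQ : IsBanditRun X κ ν Q)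
    (t : ℕ) {F : (Fin (t + 1) → Fin 2 × ℝ) → ℝ≥0∞} (hF : Measurable F) :
    ∫⁻ h, F h ∂(Q.map (history X (t + 1)))
      = ∫⁻ h, ∑ i, κ t h {i} * ∫⁻ x, F (Fin.snoc h (i, x)) ∂ν i ∂(Q.map (history X t)) := by
  have hpair : Measurable fun ω => (history X t ω, X t ω) :=
    (measurable_history hQ.1 t).prodMk (hQ.1 t)
  have hmap : Q.map (history X (t + 1))
      = (Q.map fun ω => (history X t ω, X t ω)).map fun p => Fin.snoc p.1 p.2 := by
    rw [Measure.map_map (measurable_snoc t) hpair]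
    exact congrArg (Q.map ·) (funext (history_succ X t))
  have hF_snoc : Measurable fun p : (Fin t → Fin 2 × ℝ) × Fin 2 × ℝ => F (Fin.snoc p.1 p.2) :=
    hF.comp (measurable_snoc t)
  rw [hmap, hQ.map_history_prodMk_eq_compProd t, lintegral_map hF (measurable_snoc t),
    Measure.lintegral_compProd hF_snoc]
  refine lintegral_congr fun h => ?_
  dsimp only
  rw [Kernel.lintegral_compProd _ _ _ (f := fun b => F (Fin.snoc h b))
    (hF.comp ((measurable_snoc t).comp measurable_prodMk_left)), lintegral_fintype]
  exact Finset.sum_congr rfl fun i _ => mul_comm _ _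

theorem lintegral_prod_map_history [∀ t, IsMarkovKernel (κ t)]
    [∀ i, IsProbabilityMeasure (ν i)] [IsProbabilityMeasure Q] (hQ : IsBanditRun X κ ν Q)
    {s : Fin 2 × ℝ → ℝ≥0∞} (hs : Measurable s) {c : ℝ≥0∞}
    (hc : ∀ i, ∫⁻ x, s (i, x) ∂ν i = c) (t : ℕ) :
    ∫⁻ h, ∏ ℓ, s (h ℓ) ∂(Q.map (history X t)) = c ^ t := by
  induction t with
  | zero =>
    have := hQ.isProbabilityMeasure_map_history 0
    simp [lintegral_unique]
  | succ t ih =>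
    rw [hQ.lintegral_map_history_succ t (by fun_prop), pow_succ, ← ih,
      ← lintegral_mul_const _ (by fun_prop)]
    refine lintegral_congr fun h => ?_
    have hstep (i : Fin 2) : ∫⁻ x, ∏ ℓ, s ((Fin.snoc h (i, x) : Fin (t + 1) → _) ℓ) ∂ν i
        = (∏ ℓ, s (h ℓ)) * c := by
      rw [lintegral_congr fun x => Fin.prod_comp_snoc s h (i, x),
        lintegral_const_mul _ (by fun_prop), hc]
    simp_rw [hstep, ← Finset.sum_mul, sum_measure_singleton, Finset.coe_univ, measure_univ,
      one_mul]

theorem lintegral_map_history_of_eq_withDensity [∀ t, IsMarkovKernel (κ t)]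
    [∀ i, IsProbabilityMeasure (ν i)] [∀ i, IsProbabilityMeasure (ν' i)]
    [IsProbabilityMeasure Q] [IsProbabilityMeasure Q']
    (hQ : IsBanditRun X κ ν Q) (hQ' : IsBanditRun X κ ν' Q') {d : Fin 2 × ℝ → ℝ≥0∞}
    (hd : Measurable d) (hν' : ∀ i, ν' i = (ν i).withDensity fun x => d (i, x)) (t : ℕ)
    {f : (Fin t → Fin 2 × ℝ) → ℝ≥0∞} (hf : Measurable f) :
    ∫⁻ h, f h ∂(Q'.map (history X t)) = ∫⁻ h, f h * ∏ ℓ, d (h ℓ) ∂(Q.map (history X t)) := by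
  induction t with
  | zero =>
    have := hQ.isProbabilityMeasure_map_history 0
    have := hQ'.isProbabilityMeasure_map_history 0
    simp [lintegral_unique]
  | succ t ih =>
    have hf_snoc : Measurable fun p : (Fin t → Fin 2 × ℝ) × Fin 2 × ℝ => f (Fin.snoc p.1 p.2) :=
      hf.comp (measurable_snoc t)
    have hg : Measurable fun h => ∑ i, κ t h {i} * ∫⁻ x, f (Fin.snoc h (i, x)) ∂ν' i :=
      Finset.measurable_sum _ fun i _ => ((κ t).measurable_coe (measurableSet_singleton i)).mul
        (Measurable.lintegral_prod_right'
          (hf_snoc.comp (measurable_fst.prodMk (measurable_const.prodMk measurable_snd))))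
    rw [hQ'.lintegral_map_history_succ t hf, ih hg,
      hQ.lintegral_map_history_succ t (F := fun h => f h * ∏ ℓ, d (h ℓ)) (by fun_prop)]
    refine lintegral_congr fun h => ?_
    simp_rw [Finset.sum_mul, mul_assoc]
    refine Finset.sum_congr rfl fun i _ => congrArg _ ?_
    have hf_snoc_i : Measurable fun x => f (Fin.snoc h (i, x)) :=
      hf_snoc.comp (measurable_prodMk_left.comp measurable_prodMk_left)
    rw [hν' i, lintegral_withDensity_eq_lintegral_mul _ (by fun_prop) hf_snoc_i,
      ← lintegral_mul_const _ (by fun_prop)]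
    refine lintegral_congr fun x => ?_
    rw [Fin.prod_comp_snoc]
    simp only [Pi.mul_apply]
    ring

theorem one_sub_sqrt_le_measureReal_add [∀ t, IsMarkovKernel (κ t)]
    [∀ i, IsProbabilityMeasure (ν i)] [∀ i, IsProbabilityMeasure (ν' i)]
    [IsProbabilityMeasure Q] [IsProbabilityMeasure Q']
    (hQ : IsBanditRun X κ ν Q) (hQ' : IsBanditRun X κ ν' Q') {s : Fin 2 × ℝ → ℝ≥0∞}
    (hs : Measurable s) (hν' : ∀ i, ν' i = (ν i).withDensity fun x => s (i, x) ^ 2)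
    {c : ℝ≥0∞} (hc : ∀ i, ∫⁻ x, s (i, x) ∂ν i = c) (t : ℕ) :
    1 - √(1 - (c ^ t).toReal ^ 2)
      ≤ Q.real {ω | (X t ω).1 = 1} + Q'.real {ω | (X t ω).1 = 0} := by
  set μ := Q.map (history X t)
  have := hQ.isProbabilityMeasure_map_history t
  -- `S h ^ 2` is the likelihood ratio of the history `h` under `Q'` against `Q`.
  set S : (Fin t → Fin 2 × ℝ) → ℝ≥0∞ := fun h => ∏ ℓ, s (h ℓ)
  have hchange {f : (Fin t → Fin 2 × ℝ) → ℝ≥0∞} (hf : Measurable f) :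
      ∫⁻ h, f h ∂(Q'.map (history X t)) = ∫⁻ h, f h * S h ^ 2 ∂μ := by
    simp_rw [S, ← Finset.prod_pow]
    exact hQ.lintegral_map_history_of_eq_withDensity hQ' (d := fun p => s p ^ 2) (by fun_prop)
      hν' t hf
  have hS_sq : ∫⁻ h, S h ^ 2 ∂μ = 1 := by
    have := hQ'.isProbabilityMeasure_map_history t
    simpa using (hchange measurable_const (f := fun _ => 1)).symm
  have hκ (h : Fin t → Fin 2 × ℝ) : κ t h {1} + κ t h {0} = 1 := by
    rw [add_comm, ← Fin.sum_univ_two (fun i => κ t h {i}), sum_measure_singleton,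
      Finset.coe_univ, measure_univ]
  have hmin : ∫⁻ h, min 1 (S h ^ 2) ∂μ ≤ Q {ω | (X t ω).1 = 1} + Q' {ω | (X t ω).1 = 0} := by
    rw [hQ.measure_arm_eq, hQ'.measure_arm_eq,
      hchange ((κ t).measurable_coe (measurableSet_singleton 0)),
      ← lintegral_add_left ((κ t).measurable_coe (measurableSet_singleton 1))]
    exact lintegral_mono fun h => ENNReal.min_one_le_add_mul (hκ h) _
  calc 1 - √(1 - (c ^ t).toReal ^ 2)
      = 1 - √(1 - (∫⁻ h, S h ∂μ).toReal ^ 2) := by rw [hQ.lintegral_prod_map_history hs hc t]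
    _ ≤ (∫⁻ h, min 1 (S h ^ 2) ∂μ).toReal :=
      one_sub_sqrt_le_lintegral_min μ (by fun_prop) hS_sq
    _ ≤ (Q {ω | (X t ω).1 = 1} + Q' {ω | (X t ω).1 = 0}).toReal :=
      ENNReal.toReal_mono (by finiteness) hmin
    _ = Q.real {ω | (X t ω).1 = 1} + Q'.real {ω | (X t ω).1 = 0} :=
      ENNReal.toReal_add (by finiteness) (by finiteness)

theorem one_sub_mul_sqrt_le_measureReal_add_of_gaussian [∀ t, IsMarkovKernel (κ t)]
    [IsProbabilityMeasure Q] [IsProbabilityMeasure Q'] {m m' : Fin 2 → ℝ} {v : ℝ≥0}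
    (hv : v ≠ 0) {δ : ℝ} (hδ : 0 ≤ δ) (hm : ∀ i, (m' i - m i) ^ 2 = δ ^ 2)
    (hQ : IsBanditRun X κ (fun i => gaussianReal (m i) v) Q)
    (hQ' : IsBanditRun X κ (fun i => gaussianReal (m' i) v) Q') (t : ℕ) :
    1 - δ * √(t / v) / 2 ≤ Q.real {ω | (X t ω).1 = 1} + Q'.real {ω | (X t ω).1 = 0} := by
  refine le_trans ?_ (hQ.one_sub_sqrt_le_measureReal_add hQ'
    (s := fun p => ENNReal.ofReal (exp ((m' p.1 - m p.1) / (2 * v) * (p.2 - (m p.1 + m' p.1) / 2))))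
    (c := ENNReal.ofReal (exp (-(δ ^ 2 / (8 * v))))) (by fun_prop) (fun i => ?_) (fun i => ?_) t)
  · have hv' : (0 : ℝ) < v := by positivity
    have haffinity : ((ENNReal.ofReal (exp (-(δ ^ 2 / (8 * v))))) ^ t).toReal ^ 2
        = exp (-(δ ^ 2 * t / (4 * v))) := by
      rw [← ENNReal.ofReal_pow (exp_pos _).le, ENNReal.toReal_ofReal (by positivity), ← pow_mul,
        ← exp_nat_mul]
      push_cast
      ring_nf
    have hsqrt : √(1 - exp (-(δ ^ 2 * t / (4 * v)))) ≤ δ * √(t / v) / 2 := by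
      rw [Real.sqrt_le_left (by positivity), div_pow, mul_pow, sq_sqrt (by positivity)]
      have := Real.add_one_le_exp (-(δ ^ 2 * t / (4 * v)))
      have : δ ^ 2 * (t / v) / 2 ^ 2 = δ ^ 2 * t / (4 * v) := by ring
      linarith
    rw [haffinity]
    linarith
  · rw [gaussianReal_eq_withDensity hv (m i) (m' i)]
    congr 1
    funext x
    dsimp only
    rw [← ENNReal.ofReal_pow (exp_pos _).le, ← exp_nat_mul]
    ring_nf
  · dsimp only
    rw [lintegral_sqrt_density_gaussianReal, hm i]

end IsBanditRun

theorem banditRegret_eq_sum_gap_mul {Ω : Type*} [MeasurableSpace Ω] {X : ℕ → Ω → Fin 2 × ℝ}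
    (hX : ∀ t, Measurable (X t)) (n : ℕ) (m : Fin 2 → ℝ) (Q : Measure Ω)
    [IsProbabilityMeasure Q] :
    banditRegret X n m Q
      = ∑ i, (max (m 0) (m 1) - m i) * ∑ t ∈ Finset.range n, Q.real {ω | (X t ω).1 = i} := by
  have hround (t : ℕ) : max (m 0) (m 1) - ∫ ω, m (X t ω).1 ∂Q
      = ∑ i, (max (m 0) (m 1) - m i) * Q.real {ω | (X t ω).1 = i} := by
    have hI : Measurable fun ω => (X t ω).1 := (hX t).fst
    have hsum : ∑ i, Q.real ((fun ω => (X t ω).1) ⁻¹' {i}) = 1 := by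
      rw [sum_measureReal_preimage_singleton _ fun i _ => hI (measurableSet_singleton i)]
      simp
    rw [← integral_map hI.aemeasurable (by fun_prop), integral_fintype .of_finite]
    simp only [map_measureReal_apply hI (measurableSet_singleton _), smul_eq_mul, Set.preimage,
      Set.mem_singleton_iff, Fin.sum_univ_two] at hsum ⊢
    linear_combination (-max (m 0) (m 1)) * hsum
  have hconst : (n : ℝ) * max (m 0) (m 1) = ∑ _t ∈ Finset.range n, max (m 0) (m 1) := by simp
  simp_rw [Finset.mul_sum]
  rw [Finset.sum_comm, banditRegret, hconst, ← Finset.sum_sub_distrib]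
  exact Finset.sum_congr rfl fun t _ => hround t

theorem one_div_two_mul_sq_le_sum_range {δ : ℝ} (hδ : 0 < δ) {f : ℕ → ℝ}
    (hf₀ : ∀ t, 0 ≤ f t) (hf : ∀ t : ℕ, 1 - δ * √t / 2 ≤ f t) {n : ℕ} (hn : 1 / δ ^ 2 ≤ n) :
    1 / (2 * δ ^ 2) ≤ ∑ t ∈ Finset.range n, f t := by
  set N := ⌈1 / δ ^ 2⌉₊
  have hhalf : ∀ t ∈ Finset.range N, (1 : ℝ) / 2 ≤ f t := fun t ht => by
    have ht' : δ ^ 2 * t < 1 := by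
      have := Nat.lt_ceil.1 (Finset.mem_range.1 ht)
      rwa [lt_div_iff₀ (by positivity), mul_comm] at this
    have : δ * √t < 1 := by
      rw [← abs_of_nonneg (by positivity : 0 ≤ δ * √t), ← sq_lt_one_iff_abs_lt_one, mul_pow,
        sq_sqrt t.cast_nonneg]
      exact ht'
    linarith [hf t]
  calc 1 / (2 * δ ^ 2) = 1 / δ ^ 2 * (1 / 2) := by ring
    _ ≤ (N : ℝ) * (1 / 2) := by gcongr; exact Nat.le_ceil _
    _ = ∑ _t ∈ Finset.range N, (1 : ℝ) / 2 := by simp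
    _ ≤ ∑ t ∈ Finset.range N, f t := Finset.sum_le_sum hhalf
    _ ≤ ∑ t ∈ Finset.range n, f t :=
      Finset.sum_le_sum_of_subset_of_nonneg (Finset.range_subset_range.2 (Nat.ceil_le.2 hn))
        fun t _ _ => hf₀ t

theorem lower_bound_known_mu_and_gap_general
    {Ω : Type*} [MeasurableSpace Ω]
    (Δ : ℝ) (hΔ : Δ ∈ Set.Ioc (0 : ℝ) 1)
    (X : ℕ → Ω → Fin 2 × ℝ)
    (κ : (t : ℕ) → Kernel (Fin t → Fin 2 × ℝ) (Fin 2)) [∀ t, IsMarkovKernel (κ t)]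
    (P P' : Measure Ω) [IsProbabilityMeasure P] [IsProbabilityMeasure P']
    (hP : IsBanditRun X κ
      (fun i => if i = 0 then gaussianReal 0 1 else gaussianReal (-Δ) 1) P)
    (hP' : IsBanditRun X κ
      (fun i => if i = 0 then gaussianReal (-Δ) 1 else gaussianReal 0 1) P')
    (n : ℕ) (hn' : 1 / Δ ^ 2 ≤ (n : ℝ)) :
    1 / (4 * Δ) ≤ max (banditRegret X n (fun i => if i = 0 then 0 else -Δ) P)
        (banditRegret X n (fun i => if i = 0 then -Δ else 0) P') := by
  obtain ⟨hΔ, -⟩ := hΔ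
  have hν (a b : ℝ) : (fun i : Fin 2 => if i = 0 then gaussianReal a 1 else gaussianReal b 1)
      = fun i => gaussianReal (if i = 0 then a else b) 1 := by
    funext i; split_ifs <;> rfl
  rw [hν] at hP hP'
  have hround (t : ℕ) :
      1 - Δ * √t / 2 ≤ P.real {ω | (X t ω).1 = 1} + P'.real {ω | (X t ω).1 = 0} := by
    simpa using hP.one_sub_mul_sqrt_le_measureReal_add_of_gaussian one_ne_zero hΔ.le
      (fun i => by fin_cases i <;> simp) hP' t
  have hsum := one_div_two_mul_sq_le_sum_range hΔ (fun t => by positivity) hround hn'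
  rw [Finset.sum_add_distrib] at hsum
  rw [banditRegret_eq_sum_gap_mul hP.1, banditRegret_eq_sum_gap_mul hP'.1]
  simp only [Fin.sum_univ_two, Fin.isValue, ↓reduceIte, one_ne_zero, sub_self, zero_mul,
    zero_add, add_zero, sub_neg_eq_add, max_eq_left (neg_nonpos.2 hΔ.le),
    max_eq_right (neg_nonpos.2 hΔ.le)]
  set R := ∑ t ∈ Finset.range n, P.real {ω | (X t ω).1 = 1}
  set R' := ∑ t ∈ Finset.range n, P'.real {ω | (X t ω).1 = 0}
  have hmean : 1 / (4 * Δ) ≤ (Δ * R + Δ * R') / 2 :=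
    calc 1 / (4 * Δ) = Δ * (1 / (2 * Δ ^ 2)) / 2 := by field_simp; ring
      _ ≤ (Δ * R + Δ * R') / 2 := by rw [← mul_add]; gcongr
  linarith [le_max_left (Δ * R) (Δ * R'), le_max_right (Δ * R) (Δ * R')]

/-- **Lower bound when both `μ⋆` and `Δ` are known (Theorem 4).**
Let `Δ ∈ (0,1]`, `ν = N(0,1) ⊗ N(−Δ,1)` and `ν' = N(−Δ,1) ⊗ N(0,1)`.  For any policy
(Markov kernels `κ`) run on both instances, and every `n ≥ 1` with `n ≥ 1/Δ²`,
`max (R_n(ν), R_n(ν')) ≥ 1/(4Δ)`. -/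
theorem lower_bound_known_mu_and_gap
    {Ω : Type*} [MeasurableSpace Ω]
    (Δ : ℝ) (hΔ : Δ ∈ Set.Ioc (0 : ℝ) 1)
    (X : ℕ → Ω → Fin 2 × ℝ)
    (κ : (t : ℕ) → Kernel (Fin t → Fin 2 × ℝ) (Fin 2)) [∀ t, IsMarkovKernel (κ t)]
    (P P' : Measure Ω) [IsProbabilityMeasure P] [IsProbabilityMeasure P']
    (hP : IsBanditRun X κ
      (fun i => if i = 0 then gaussianReal 0 1 else gaussianReal (-Δ) 1) P)
    (hP' : IsBanditRun X κ
      (fun i => if i = 0 then gaussianReal (-Δ) 1 else gaussianReal 0 1) P')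
    (n : ℕ) (hn : 1 ≤ n) (hn' : 1 / Δ ^ 2 ≤ (n : ℝ)) :
    1 / (4 * Δ) ≤ max (banditRegret X n (fun i => if i = 0 then 0 else -Δ) P)
        (banditRegret X n (fun i => if i = 0 then -Δ else 0) P') :=
  lower_bound_known_mu_and_gap_general Δ hΔ X κ P P' hP hP' n hn'
end
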